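/- arXiv:1912.02000 — 5 statements merged into one kernel-verified Lean document; each statement's English description precedes it below -/
import Mathlib

section
/- In the coordination game, a configuration x* is a pure Nash equilibrium if and only if: for every player i with x*_i = +1, r_i ≤ z̃(x*) − 1/(n−1), and for every player i with x*_i = −1, r_i ≥ z̃(x*), where z̃(x*) = |{j : x*_j = +1}|/(n−1). -/
/-!
Player `i`'s payoff from playing `y` against `x` is `y * (∑_{j ≠ i} x_j - d_i)`, so `x` is an
equilibrium iff `x_i * (∑_{j ≠ i} x_j - d_i) ≥ 0` for every `i`. If `K` players play `+1`, then
`∑_{j ≠ i} x_j = 2K - n - x_i`; in each of the two cases `x_i = ±1` the sign condition becomes the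
threshold inequality after multiplying by `2(n - 1) > 0`.
-/

open Finset

/-- Coordination game utility. -/
def coordU {n : ℕ} (d : Fin n → ℝ) (i : Fin n) (x : Fin n → ℝ) : ℝ :=
  ∑ j ∈ Finset.univ.erase i, x i * x j - d i * x i

/-- z̃(x) = |{j : x_j = +1}| / (n−1). -/
noncomputable def ztilde (n : ℕ) (x : Fin n → ℝ) : ℝ :=
  ({j : Fin n | x j = 1}.ncard : ℝ) / ((n : ℝ) - 1)

lemma forall_pm_one_mul_le_iff {a c : ℝ} (ha : a = 1 ∨ a = -1) :
    (∀ y : ℝ, (y = 1 ∨ y = -1) → y * c ≤ a * c) ↔ 0 ≤ a * c := by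
  constructor
  · intro h
    have := h (-a) (by rcases ha with rfl | rfl <;> norm_num)
    linarith
  · rintro h y (rfl | rfl) <;> rcases ha with rfl | rfl <;> linarith

lemma sum_eq_two_mul_card_filter_sub {ι : Type*} [Fintype ι] (x : ι → ℝ)
    (hx : ∀ j, x j = 1 ∨ x j = -1) :
    ∑ j, x j = 2 * #{j | x j = 1} - Fintype.card ι := by
  have hx' : ∀ j, x j = 2 * (if x j = 1 then 1 else 0) - 1 := fun j => by
    rcases hx j with h | h <;> norm_num [h]
  rw [Fintype.sum_congr _ _ hx', sum_sub_distrib, ← mul_sum, sum_boole]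
  simp

lemma coordU_update {n : ℕ} (d : Fin n → ℝ) (i : Fin n) (x : Fin n → ℝ) (y : ℝ) :
    coordU d i (Function.update x i y) = y * (∑ j ∈ univ.erase i, x j - d i) := by
  have hsum : ∑ j ∈ univ.erase i, y * Function.update x i y j = ∑ j ∈ univ.erase i, y * x j :=
    sum_congr rfl fun j hj => by rw [Function.update_of_ne (ne_of_mem_erase hj)]
  rw [coordU, Function.update_self, hsum, ← mul_sum]
  ring

lemma coordU_update_le_iff {n : ℕ} (d : Fin n → ℝ) (i : Fin n) {x : Fin n → ℝ}
    (hxi : x i = 1 ∨ x i = -1) :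
    (∀ y : ℝ, (y = 1 ∨ y = -1) → coordU d i (Function.update x i y) ≤ coordU d i x) ↔
      0 ≤ x i * (∑ j ∈ univ.erase i, x j - d i) := by
  have hx : coordU d i x = x i * (∑ j ∈ univ.erase i, x j - d i) := by
    simpa using coordU_update d i x (x i)
  simp only [coordU_update, hx]
  exact forall_pm_one_mul_le_iff hxi

lemma ztilde_eq_card_filter_div (n : ℕ) (x : Fin n → ℝ) :
    ztilde n x = (#{j | x j = 1} : ℝ) / ((n : ℝ) - 1) := by
  rw [ztilde, ← coe_filter_univ, Set.ncard_coe_finset]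

lemma half_add_div_le_div_sub_div_iff {m k d : ℝ} (hm : 0 < m) :
    1 / 2 + d / (2 * m) ≤ k / m - 1 / m ↔ 0 ≤ 2 * k - m - 2 - d := by
  rw [← sub_nonneg]
  have : k / m - 1 / m - (1 / 2 + d / (2 * m)) = (2 * k - m - 2 - d) / (2 * m) := by
    field_simp; ring
  rw [this, le_div_iff₀ (by positivity), zero_mul]

lemma div_le_half_add_div_iff {m k d : ℝ} (hm : 0 < m) :
    k / m ≤ 1 / 2 + d / (2 * m) ↔ 2 * k - m - d ≤ 0 := by
  rw [← sub_nonpos]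
  have : k / m - (1 / 2 + d / (2 * m)) = (2 * k - m - d) / (2 * m) := by
    field_simp; ring
  rw [this, div_le_iff₀ (by positivity), zero_mul]

/-- Characterization of Nash equilibria of the coordination game in terms of
thresholds r_i = 1/2 + d_i/(2(n−1)). -/
theorem coord_nash_characterization {n : ℕ} (hn : 2 ≤ n) (d : Fin n → ℝ)
    (r : Fin n → ℝ) (hr : ∀ i, r i = 1/2 + d i / (2 * ((n : ℝ) - 1)))
    (x : Fin n → ℝ) (hx : ∀ i, x i = 1 ∨ x i = -1) :
    (∀ (i : Fin n) (y : ℝ), (y = 1 ∨ y = -1) →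
        coordU d i (Function.update x i y) ≤ coordU d i x) ↔
      ((∀ i, x i = 1 → r i ≤ ztilde n x - 1 / ((n : ℝ) - 1)) ∧
       (∀ i, x i = -1 → r i ≥ ztilde n x)) := by
  have hm : (0 : ℝ) < n - 1 := by
    have : (2 : ℝ) ≤ n := by exact_mod_cast hn
    linarith
  have hsum := sum_eq_two_mul_card_filter_sub x hx
  rw [Fintype.card_fin] at hsum
  rw [← forall_and]
  refine forall_congr' fun i => ?_
  rw [coordU_update_le_iff d i (hx i), sum_erase_eq_sub (mem_univ i), hsum,
    ztilde_eq_card_filter_div, hr i, ge_iff_le, div_le_half_add_div_iff hm, half_add_div_le_div_sub_div_iff hm]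
  rcases hx i with h | h <;> norm_num [h] <;> constructor <;> intro <;> linarith
end

section
/- In the anti-coordination game, a configuration x* is a pure Nash equilibrium if and only if: for every player i with x*_i = +1, r_i ≥ z̃(x*) − 1/(n−1), and for every player i with x*_i = −1, r_i ≤ z̃(x*), where z̃(x*) = |{j : x*_j = +1}|/(n−1). -/
/-!
Player `i`'s payoff is `x i * (d i - s i)`, where `s i` is the sum of the other players' actions,
so the only deviation, to `-x i`, is unprofitable iff `0 ≤ x i * (d i - s i)`. In a `±1` profile
with `k` players at `+1` we have `s i = 2k - n - x i`, and with `d i = (n - 1) (2 r i - 1)` the sign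
condition reads `r i ≥ (k - 1)/(n - 1)` when `x i = 1` and `r i ≤ k/(n - 1)` when `x i = -1`.
-/

open Finset

/-- Anti-coordination game utility. -/
def antiCoordU {n : ℕ} (d : Fin n → ℝ) (i : Fin n) (x : Fin n → ℝ) : ℝ :=
  -(∑ j ∈ Finset.univ.erase i, x i * x j - d i * x i)

section SignVectors

variable {ι : Type*} [Fintype ι] {x : ι → ℝ}

theorem sum_eq_two_mul_card_sub (hx : ∀ j, x j = 1 ∨ x j = -1) :
    ∑ j, x j = 2 * #{j | x j = 1} - Fintype.card ι := by
  have h : ∀ j ∈ univ, x j = 2 * (if x j = 1 then 1 else 0) - 1 := by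
    intro j _
    rcases hx j with h | h <;> norm_num [h]
  rw [sum_congr rfl h, sum_sub_distrib, ← mul_sum, sum_boole, sum_const, card_univ]
  simp

theorem sum_erase_eq_two_mul_card_sub [DecidableEq ι] (hx : ∀ j, x j = 1 ∨ x j = -1) (i : ι) :
    ∑ j ∈ univ.erase i, x j = 2 * #{j | x j = 1} - Fintype.card ι - x i := by
  rw [← sum_eq_two_mul_card_sub hx, ← add_sum_erase univ x (mem_univ i)]
  ring

end SignVectors

section AntiCoordination

variable {n : ℕ}

theorem ztilde_eq_card_div (x : Fin n → ℝ) : ztilde n x = #{j | x j = 1} / ((n : ℝ) - 1) := by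
  rw [ztilde, Set.ncard_eq_toFinset_card', Set.toFinset_ofPred]

theorem antiCoordU_update (d : Fin n → ℝ) (i : Fin n) (x : Fin n → ℝ) (y : ℝ) :
    antiCoordU d i (Function.update x i y) = y * (d i - ∑ j ∈ univ.erase i, x j) := by
  have h : ∀ j ∈ univ.erase i, Function.update x i y j = x j := fun j hj =>
    Function.update_of_ne (ne_of_mem_erase hj) _ _
  rw [antiCoordU, Function.update_self, ← mul_sum, sum_congr rfl h]
  ring

theorem antiCoordU_eq (d : Fin n → ℝ) (i : Fin n) (x : Fin n → ℝ) :
    antiCoordU d i x = x i * (d i - ∑ j ∈ univ.erase i, x j) := by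
  simpa only [Function.update_eq_self] using antiCoordU_update d i x (x i)

theorem antiCoordU_update_le_iff {d : Fin n → ℝ} {i : Fin n} {x : Fin n → ℝ}
    (hxi : x i = 1 ∨ x i = -1) :
    (∀ y : ℝ, (y = 1 ∨ y = -1) → antiCoordU d i (Function.update x i y) ≤ antiCoordU d i x) ↔
      0 ≤ x i * (d i - ∑ j ∈ univ.erase i, x j) := by
  simp only [antiCoordU_update, or_imp, forall_and, forall_eq]
  rw [antiCoordU_eq]
  rcases hxi with h | h <;> rw [h] <;>
    exact ⟨fun h => by linarith [h.1, h.2], fun h => ⟨by linarith, by linarith⟩⟩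

end AntiCoordination

/-- Characterization of Nash equilibria of the anti-coordination game. -/
theorem antiCoord_nash_characterization {n : ℕ} (hn : 2 ≤ n) (d : Fin n → ℝ)
    (r : Fin n → ℝ) (hr : ∀ i, r i = 1/2 + d i / (2 * ((n : ℝ) - 1)))
    (x : Fin n → ℝ) (hx : ∀ i, x i = 1 ∨ x i = -1) :
    (∀ (i : Fin n) (y : ℝ), (y = 1 ∨ y = -1) →
        antiCoordU d i (Function.update x i y) ≤ antiCoordU d i x) ↔
      ((∀ i, x i = 1 → r i ≥ ztilde n x - 1 / ((n : ℝ) - 1)) ∧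
       (∀ i, x i = -1 → r i ≤ ztilde n x)) := by
  have hpos : (0 : ℝ) < n - 1 := by
    have : (2 : ℝ) ≤ n := by exact_mod_cast hn
    linarith
  have hd : ∀ i, d i = ((n : ℝ) - 1) * (2 * r i - 1) := fun i => by
    rw [hr i]
    field_simp
    ring
  rw [← forall_and]
  refine forall_congr' fun i => ?_
  rw [antiCoordU_update_le_iff (hx i), sum_erase_eq_two_mul_card_sub hx, Fintype.card_fin, hd i,
    ztilde_eq_card_div, div_sub_div_same, ge_iff_le, div_le_iff₀ hpos, le_div_iff₀ hpos]
  rcases hx i with h | h <;> norm_num [h] <;> constructor <;> intro <;> linarith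
end

section
/- In the mixed coordination/anti-coordination game, a configuration x is a pure Nash equilibrium if and only if: r_i ≤ z̃(x) − 1/(n−1) for every coordinating i with x_i = +1; r_i ≥ z̃(x) for every coordinating i with x_i = −1; r_i ≥ z̃(x) − 1/(n−1) for every anti-coordinating i with x_i = +1; and r_i ≤ z̃(x) for every anti-coordinating i with x_i = −1. -/
/-!
The utility of player `i` is linear in its own action: `u_i(x) = x_i · δ_i (S_i − d_i)` with
`S_i = Σ_{j ≠ i} x_j`, so `x_i` is a best response iff `0 ≤ x_i · δ_i (S_i − d_i)`.
If `m` players play `+1`, then `S_i = 2m − n − x_i`, and `S_i − d_i` is `2(n−1)(z̃ − r_i)` when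
`x_i = −1` and `2(n−1)(z̃ − 1/(n−1) − r_i)` when `x_i = +1`. The sign of `x_i δ_i` in the four
cases yields the four threshold conditions.
-/

open Finset

/-- Mixed CAC game utility: u_i(x) = δ_i(Σ_{j≠i} x_i x_j − d_i x_i), with
δ_i = +1 for coordinating agents (i ∈ Vc) and δ_i = −1 otherwise. -/
def mixedU {n : ℕ} (Vc : Finset (Fin n)) (d : Fin n → ℝ) (i : Fin n) (x : Fin n → ℝ) : ℝ :=
  (if i ∈ Vc then (1 : ℝ) else -1) * (∑ j ∈ Finset.univ.erase i, x i * x j - d i * x i)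

lemma forall_sign_mul_le_iff {a b : ℝ} (hb : b = 1 ∨ b = -1) :
    (∀ y : ℝ, (y = 1 ∨ y = -1) → y * a ≤ b * a) ↔ 0 ≤ b * a := by
  constructor
  · intro h
    have := h (-b) (by rcases hb with rfl | rfl <;> norm_num)
    linarith
  · rintro h y (rfl | rfl) <;> rcases hb with rfl | rfl <;> linarith

lemma sum_eq_two_mul_ncard_sub {ι : Type*} [Fintype ι] {x : ι → ℝ}
    (hx : ∀ i, x i = 1 ∨ x i = -1) :
    ∑ i, x i = 2 * {i | x i = 1}.ncard - Fintype.card ι := by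
  classical
  have hx' : ∀ i, x i = 2 * (if x i = 1 then 1 else 0) - 1 := fun i => by
    rcases hx i with h | h <;> norm_num [h]
  rw [sum_congr rfl fun i _ => hx' i, sum_sub_distrib, ← mul_sum, sum_boole,
    Set.ncard_eq_toFinset_card', Set.toFinset_ofPred]
  simp

section Game

variable {n : ℕ} (Vc : Finset (Fin n)) (d : Fin n → ℝ)

lemma mixedU_update (x : Fin n → ℝ) (i : Fin n) (y : ℝ) :
    mixedU Vc d i (Function.update x i y) =
      y * ((if i ∈ Vc then 1 else -1) * (∑ j ∈ univ.erase i, x j - d i)) := by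
  rw [mixedU, Function.update_self,
    sum_congr rfl fun j hj => by rw [Function.update_of_ne (ne_of_mem_erase hj)], ← mul_sum]
  ring

lemma mixedU_eq (x : Fin n → ℝ) (i : Fin n) :
    mixedU Vc d i x = x i * ((if i ∈ Vc then 1 else -1) * (∑ j ∈ univ.erase i, x j - d i)) := by
  simpa using mixedU_update Vc d x i (x i)

lemma mixedU_update_le_iff {x : Fin n → ℝ} {i : Fin n} (hxi : x i = 1 ∨ x i = -1) :
    (∀ y : ℝ, (y = 1 ∨ y = -1) → mixedU Vc d i (Function.update x i y) ≤ mixedU Vc d i x) ↔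
      0 ≤ x i * ((if i ∈ Vc then 1 else -1) * (∑ j ∈ univ.erase i, x j - d i)) := by
  simp only [mixedU_update]
  rw [mixedU_eq]
  exact forall_sign_mul_le_iff hxi

end Game

lemma sum_erase_eq_two_mul_ncard_sub {n : ℕ} {x : Fin n → ℝ} (hx : ∀ i, x i = 1 ∨ x i = -1)
    (i : Fin n) :
    ∑ j ∈ univ.erase i, x j = 2 * {j | x j = 1}.ncard - n - x i := by
  rw [sum_erase_eq_sub (mem_univ i), sum_eq_two_mul_ncard_sub hx, Fintype.card_fin]

lemma sub_one_pos_of_two_le {n : ℕ} (hn : 2 ≤ n) : (0 : ℝ) < n - 1 := by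
  have : (2 : ℝ) ≤ n := by exact_mod_cast hn
  linarith

section Thresholds

variable {n : ℕ} (hn : 2 ≤ n) {d r : Fin n → ℝ} (hr : ∀ i, r i = 1/2 + d i / (2 * ((n : ℝ) - 1)))
  {x : Fin n → ℝ} (hx : ∀ i, x i = 1 ∨ x i = -1) {i : Fin n}
include hn hr hx

lemma sum_erase_sub_eq_of_eq_one (hxi : x i = 1) :
    ∑ j ∈ univ.erase i, x j - d i =
      2 * ((n : ℝ) - 1) * (ztilde n x - 1 / ((n : ℝ) - 1) - r i) := by
  have hc := (sub_one_pos_of_two_le hn).ne'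
  rw [sum_erase_eq_two_mul_ncard_sub hx, hxi, hr, ztilde]
  field_simp
  ring

lemma sum_erase_sub_eq_of_eq_neg_one (hxi : x i = -1) :
    ∑ j ∈ univ.erase i, x j - d i = 2 * ((n : ℝ) - 1) * (ztilde n x - r i) := by
  have hc := (sub_one_pos_of_two_le hn).ne'
  rw [sum_erase_eq_two_mul_ncard_sub hx, hxi, hr, ztilde]
  field_simp
  ring

lemma mixedU_update_le_iff_threshold (Vc : Finset (Fin n)) :
    (∀ y : ℝ, (y = 1 ∨ y = -1) → mixedU Vc d i (Function.update x i y) ≤ mixedU Vc d i x) ↔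
      ((i ∈ Vc → x i = 1 → r i ≤ ztilde n x - 1 / ((n : ℝ) - 1)) ∧
       (i ∈ Vc → x i = -1 → r i ≥ ztilde n x) ∧
       (i ∉ Vc → x i = 1 → r i ≥ ztilde n x - 1 / ((n : ℝ) - 1)) ∧
       (i ∉ Vc → x i = -1 → r i ≤ ztilde n x)) := by
  have hc : 0 < 2 * ((n : ℝ) - 1) := by linarith [sub_one_pos_of_two_le hn]
  rw [mixedU_update_le_iff Vc d (hx i)]
  rcases hx i with hxi | hxi
  · rw [sum_erase_sub_eq_of_eq_one hn hr hx hxi, hxi, mul_left_comm _ (2 * _),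
      mul_left_comm, mul_nonneg_iff_of_pos_left hc]
    by_cases hi : i ∈ Vc <;> norm_num [hi]
  · rw [sum_erase_sub_eq_of_eq_neg_one hn hr hx hxi, hxi, mul_left_comm _ (2 * _),
      mul_left_comm, mul_nonneg_iff_of_pos_left hc]
    by_cases hi : i ∈ Vc <;> norm_num [hi]

end Thresholds

/-- Characterization of Nash equilibria of the mixed
coordination/anti-coordination game. -/
theorem mixed_nash_characterization {n : ℕ} (hn : 2 ≤ n)
    (Vc : Finset (Fin n)) (d : Fin n → ℝ)
    (r : Fin n → ℝ) (hr : ∀ i, r i = 1/2 + d i / (2 * ((n : ℝ) - 1)))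
    (x : Fin n → ℝ) (hx : ∀ i, x i = 1 ∨ x i = -1) :
    (∀ (i : Fin n) (y : ℝ), (y = 1 ∨ y = -1) →
        mixedU Vc d i (Function.update x i y) ≤ mixedU Vc d i x) ↔
      ((∀ i ∈ Vc, x i = 1 → r i ≤ ztilde n x - 1 / ((n : ℝ) - 1)) ∧
       (∀ i ∈ Vc, x i = -1 → r i ≥ ztilde n x) ∧
       (∀ i, i ∉ Vc → x i = 1 → r i ≥ ztilde n x - 1 / ((n : ℝ) - 1)) ∧
       (∀ i, i ∉ Vc → x i = -1 → r i ≤ ztilde n x)) := by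
  simp only [mixedU_update_le_iff_threshold hn hr hx Vc, forall_and]
end

section
/- If z* ∈ {0, 1/n, …, 1} satisfies z* − 1/n < G_a((n/(n−1))(z* − 1/n)) and z* ≥ G_a((n/(n−1))z*), then z* satisfies the Nash equilibrium condition: G_a((n/(n−1))(z* − ε)) ≥ z* ≥ G_a((n/(n−1))z*) for every ε ∈ (1/n, 2/n]. -/
/-- Threshold CCDF. -/
noncomputable def Ga {n : ℕ} (r : Fin n → ℝ) (z : ℝ) : ℝ :=
  ({i : Fin n | r i > z}.ncard : ℝ) / n

lemma natCast_div_le_of_sub_one_div_lt (k m n : ℕ)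
    (h : (k : ℝ) / n - 1 / n < (m : ℝ) / n) : (k : ℝ) / n ≤ (m : ℝ) / n := by
  rcases Nat.eq_zero_or_pos n with rfl | hn
  · simp
  have hn' : (0 : ℝ) < n := by exact_mod_cast hn
  have hkm : (k : ℝ) < m + 1 := by
    rw [← sub_div, div_lt_div_iff_of_pos_right hn'] at h
    linarith
  gcongr
  exact_mod_cast Nat.lt_succ_iff.mp (by exact_mod_cast hkm)

-- For `n = 1` the quotient is `1 / 0`, which is `0` in Lean.
lemma natCast_div_natCast_sub_one_nonneg (n : ℕ) : 0 ≤ (n : ℝ) / ((n : ℝ) - 1) := by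
  rcases Nat.eq_zero_or_pos n with rfl | hn
  · simp
  exact div_nonneg n.cast_nonneg (sub_nonneg.mpr (by exact_mod_cast hn))

lemma Ga_antitone {n : ℕ} (r : Fin n → ℝ) : Antitone (Ga r) := fun _ _ h ↦ by
  unfold Ga
  gcongr ?_ / _
  exact_mod_cast Set.ncard_le_ncard (fun i hi ↦ lt_of_le_of_lt h hi) (Set.toFinite _)

lemma le_Ga_of_sub_one_div_lt_Ga {n : ℕ} (r : Fin n → ℝ) (k : ℕ) {z : ℝ}
    (h : (k : ℝ) / n - 1 / n < Ga r z) : (k : ℝ) / n ≤ Ga r z :=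
  natCast_div_le_of_sub_one_div_lt _ _ _ h

theorem candidate_is_solution_general {n : ℕ} (r : Fin n → ℝ)
    (k : ℕ)
    (h1 : (k : ℝ) / n - 1 / (n : ℝ) <
      Ga r (((n : ℝ) / ((n : ℝ) - 1)) * ((k : ℝ) / n - 1 / (n : ℝ))))
    (h2 : (k : ℝ) / n ≥ Ga r (((n : ℝ) / ((n : ℝ) - 1)) * ((k : ℝ) / n))) :
    ∀ ε : ℝ, 1 / (n : ℝ) < ε → ε ≤ 2 / (n : ℝ) →
      Ga r (((n : ℝ) / ((n : ℝ) - 1)) * ((k : ℝ) / n - ε)) ≥ (k : ℝ) / n ∧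
      (k : ℝ) / n ≥ Ga r (((n : ℝ) / ((n : ℝ) - 1)) * ((k : ℝ) / n)) := by
  intro ε hε _
  refine ⟨?_, h2⟩
  calc (k : ℝ) / n
      ≤ Ga r (((n : ℝ) / ((n : ℝ) - 1)) * ((k : ℝ) / n - 1 / (n : ℝ))) :=
        le_Ga_of_sub_one_div_lt_Ga r k h1
    _ ≤ Ga r (((n : ℝ) / ((n : ℝ) - 1)) * ((k : ℝ) / n - ε)) :=
        Ga_antitone r <| mul_le_mul_of_nonneg_left (by linarith)
          (natCast_div_natCast_sub_one_nonneg n)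

/-- A grid point z* = k/n with z*−1/n < G_a((n/(n−1))(z*−1/n)) and
z* ≥ G_a((n/(n−1))z*) satisfies the full Nash-equilibrium condition. -/
theorem candidate_is_solution {n : ℕ} (hn : 2 ≤ n) (r : Fin n → ℝ)
    (k : ℕ) (hk : k ≤ n)
    (h1 : (k : ℝ) / n - 1 / (n : ℝ) <
      Ga r (((n : ℝ) / ((n : ℝ) - 1)) * ((k : ℝ) / n - 1 / (n : ℝ))))
    (h2 : (k : ℝ) / n ≥ Ga r (((n : ℝ) / ((n : ℝ) - 1)) * ((k : ℝ) / n))) :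
    ∀ ε : ℝ, 1 / (n : ℝ) < ε → ε ≤ 2 / (n : ℝ) →
      Ga r (((n : ℝ) / ((n : ℝ) - 1)) * ((k : ℝ) / n - ε)) ≥ (k : ℝ) / n ∧
      (k : ℝ) / n ≥ Ga r (((n : ℝ) / ((n : ℝ) - 1)) * ((k : ℝ) / n)) :=
  candidate_is_solution_general r k h1 h2
end

section
/- In the anti-coordination game, the set Z of fractions z ∈ {0, 1/n, …, 1} satisfying the Nash equilibrium condition G_a((n/(n−1))(z − ε)) ≥ z ≥ G_a((n/(n−1))z) for all ε ∈ (1/n, 2/n] has cardinality 1 ≤ |Z| ≤ 2, and if |Z| = 2 the two elements differ by exactly 1/n. -/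
open Set

namespace AntiCoord

lemma one_le_ncard_and_ncard_le_two_of_mem_of_subset_pair {Z : Set ℕ} {a : ℕ} (ha : a ∈ Z)
    (hZ : Z ⊆ {a, a + 1}) :
    1 ≤ Z.ncard ∧ Z.ncard ≤ 2 ∧ (Z.ncard = 2 → ∃ k : ℕ, Z = {k, k + 1}) := by
  have hpair : ({a, a + 1} : Set ℕ).Finite := toFinite _
  have hpair_card : ({a, a + 1} : Set ℕ).ncard = 2 := ncard_pair (by omega)
  have hle : Z.ncard ≤ 2 := hpair_card ▸ ncard_le_ncard hZ hpair
  refine ⟨(ncard_pos (hpair.subset hZ)).mpr ⟨a, ha⟩, hle, fun h2 => ⟨a, ?_⟩⟩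
  exact eq_of_subset_of_ncard_le hZ (by omega) hpair

lemma div_sub_one_mul_div_sub {a : ℝ} (ha : a ≠ 0) (k ε : ℝ) :
    a / (a - 1) * (k / a - ε) = (k - a * ε) / (a - 1) := by
  rw [div_mul_eq_mul_div, mul_sub, mul_div_cancel₀ _ ha]

lemma div_sub_one_mul_div {a : ℝ} (ha : a ≠ 0) (k : ℝ) :
    a / (a - 1) * (k / a) = k / (a - 1) := by
  simpa using div_sub_one_mul_div_sub ha k 0

section FirstCrossing

variable {N : ℝ → ℕ} {d : ℝ} (hex : ∃ k : ℕ, N (k / d) ≤ k)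

lemma find_le_apply_sub_one_div : Nat.find hex ≤ N ((Nat.find hex - 1 : ℝ) / d) := by
  rcases Nat.eq_zero_or_pos (Nat.find hex) with h0 | hpos
  · simp [h0]
  · have hmin := Nat.find_min hex (Nat.sub_one_lt_of_lt hpos)
    rw [Nat.cast_pred hpos] at hmin
    omega

lemma le_find_add_one (hN : Antitone N) (hd : 0 ≤ d) {k : ℕ}
    (hk : k ≤ N ((k - 2 : ℝ) / d)) : k ≤ Nat.find hex + 1 := by
  by_contra! hlt
  have hgrid : (Nat.find hex : ℝ) / d ≤ (k - 2 : ℝ) / d := by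
    gcongr
    have : ((Nat.find hex + 2 : ℕ) : ℝ) ≤ k := by exact_mod_cast hlt
    push_cast at this
    linarith
  have := (hN hgrid).trans (Nat.find_spec hex)
  omega

end FirstCrossing

section Game

variable {n : ℕ} (r : Fin n → ℝ)

noncomputable def aboveCount (x : ℝ) : ℕ := {i | x < r i}.ncard

lemma aboveCount_antitone : Antitone (aboveCount r) :=
  fun _ _ hxy => ncard_le_ncard (fun _ hi => hxy.trans_lt hi) (toFinite _)

lemma aboveCount_le_card (x : ℝ) : aboveCount r x ≤ n := by
  simpa [aboveCount, Set.ncard_univ] using ncard_le_ncard (subset_univ {i | x < r i}) (toFinite _)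

lemma div_le_Ga_iff (hn : 0 < n) (k : ℕ) (x : ℝ) :
    (k : ℝ) / n ≤ Ga r x ↔ k ≤ aboveCount r x := by
  rw [Ga, div_le_div_iff_of_pos_right (by exact_mod_cast hn), Nat.cast_le]
  rfl

lemma Ga_le_div_iff (hn : 0 < n) (k : ℕ) (x : ℝ) :
    Ga r x ≤ (k : ℝ) / n ↔ aboveCount r x ≤ k := by
  rw [Ga, div_le_div_iff_of_pos_right (by exact_mod_cast hn), Nat.cast_le]
  rfl

/-- `k` counts the players choosing `a`; the paper's fraction is `z = k / n`. -/
def IsEquilibriumFraction (k : ℕ) : Prop :=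
  ∀ ε : ℝ, 1 / (n : ℝ) < ε → ε ≤ 2 / (n : ℝ) →
    Ga r (((n : ℝ) / ((n : ℝ) - 1)) * ((k : ℝ) / n - ε)) ≥ (k : ℝ) / n ∧
    (k : ℝ) / n ≥ Ga r (((n : ℝ) / ((n : ℝ) - 1)) * ((k : ℝ) / n))

variable {r}

lemma IsEquilibriumFraction.aboveCount_le (hn : 0 < n) {k : ℕ} (h : IsEquilibriumFraction r k) :
    aboveCount r (k / (n - 1 : ℝ)) ≤ k := by
  have hn' : (0 : ℝ) < n := by exact_mod_cast hn
  have := (h (2 / n) (by gcongr; norm_num) le_rfl).2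
  rwa [div_sub_one_mul_div hn'.ne', ge_iff_le, Ga_le_div_iff r hn] at this

lemma IsEquilibriumFraction.le_aboveCount (hn : 0 < n) {k : ℕ} (h : IsEquilibriumFraction r k) :
    k ≤ aboveCount r ((k - 2 : ℝ) / (n - 1)) := by
  have hn' : (0 : ℝ) < n := by exact_mod_cast hn
  have := (h (2 / n) (by gcongr; norm_num) le_rfl).1
  rwa [div_sub_one_mul_div_sub hn'.ne', mul_div_cancel₀ _ hn'.ne', ge_iff_le,
    div_le_Ga_iff r hn] at this

lemma isEquilibriumFraction_of (hn : 0 < n) {k : ℕ}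
    (hleft : k ≤ aboveCount r ((k - 1 : ℝ) / (n - 1)))
    (hright : aboveCount r (k / (n - 1 : ℝ)) ≤ k) : IsEquilibriumFraction r k := by
  have hn' : (1 : ℝ) ≤ n := by exact_mod_cast hn
  intro ε hε _
  rw [div_sub_one_mul_div_sub (by positivity), div_sub_one_mul_div (by positivity), ge_iff_le,
    ge_iff_le, div_le_Ga_iff r hn, Ga_le_div_iff r hn]
  refine ⟨hleft.trans (aboveCount_antitone r ?_), hright⟩
  have : 1 < (n : ℝ) * ε := by rwa [div_lt_iff₀' (by positivity)] at hε
  gcongr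

end Game

end AntiCoord

open AntiCoord

/-- The set of equilibrium fractions of the anti-coordination game has one or
two elements, and in the latter case they are consecutive grid points. -/
theorem antiCoord_solution_set_card {n : ℕ} (hn : 2 ≤ n) (r : Fin n → ℝ)
    (Z : Set ℕ)
    (hZ : Z = {k : ℕ | k ≤ n ∧ ∀ ε : ℝ, 1 / (n : ℝ) < ε → ε ≤ 2 / (n : ℝ) →
      Ga r (((n : ℝ) / ((n : ℝ) - 1)) * ((k : ℝ) / n - ε)) ≥ (k : ℝ) / n ∧
      (k : ℝ) / n ≥ Ga r (((n : ℝ) / ((n : ℝ) - 1)) * ((k : ℝ) / n))}) :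
    1 ≤ Z.ncard ∧ Z.ncard ≤ 2 ∧ (Z.ncard = 2 → ∃ k : ℕ, Z = {k, k + 1}) := by
  have hn0 : 0 < n := by omega
  have hgrid : (0 : ℝ) ≤ n - 1 := by
    have : (1 : ℝ) ≤ n := by exact_mod_cast hn0
    linarith
  have hex : ∃ k : ℕ, aboveCount r (k / (n - 1 : ℝ)) ≤ k := ⟨n, aboveCount_le_card r _⟩
  subst hZ
  have hK : Nat.find hex ∈ {k : ℕ | k ≤ n ∧ IsEquilibriumFraction r k} :=
    ⟨Nat.find_min' hex (aboveCount_le_card r _),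
      isEquilibriumFraction_of hn0 (find_le_apply_sub_one_div hex) (Nat.find_spec hex)⟩
  refine one_le_ncard_and_ncard_le_two_of_mem_of_subset_pair hK fun k hk => ?_
  obtain ⟨-, hk⟩ : k ≤ n ∧ IsEquilibriumFraction r k := hk
  have hlower : Nat.find hex ≤ k := Nat.find_min' hex (hk.aboveCount_le hn0)
  have hupper : k ≤ Nat.find hex + 1 :=
    le_find_add_one hex (aboveCount_antitone r) hgrid (hk.le_aboveCount hn0)
  rw [mem_insert_iff, mem_singleton_iff]
  omega
end
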